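/- The functor P̄ has no nonzero polynomial subfunctors: if A ⊆ P̄ is a subfunctor with Δ^{m+1}A = 0 for some m ≥ 0, then A = 0. Equivalently, p_n P̄ = 0 for all n ≥ 0. -/

import Mathlib

open CategoryTheory CategoryTheory.Limits TensorProduct MonoidalCategory

noncomputable section

variable (p : ℕ) [Fact p.Prime]

/-- `k = F_p`. -/
abbrev Kk (p : ℕ) : Type := ZMod p

/-- The category `𝓕` of functors from finite-dimensional `F_p`-vector spaces
to `F_p`-vector spaces. -/
abbrev FF (p : ℕ) [Fact p.Prime] := FGModuleCat.{0} (Kk p) ⥤ ModuleCat.{0} (Kk p)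

/-- The functor `V ↦ V ⊕ k` on finite-dimensional vector spaces. -/
def addOne : FGModuleCat.{0} (Kk p) ⥤ FGModuleCat.{0} (Kk p) where
  obj V := FGModuleCat.of (Kk p) (V × Kk p)
  map f := FGModuleCat.ofHom (LinearMap.prodMap f.hom.hom (LinearMap.id) : _ →ₗ[Kk p] _)
  map_id := by intros; ext x <;> rfl
  map_comp := by intros; ext x <;> rfl

/-- The natural inclusion `i_V : V → V ⊕ k`. -/
def inclOne : 𝟭 (FGModuleCat.{0} (Kk p)) ⟶ addOne p where
  app V := FGModuleCat.ofHom (LinearMap.inl (Kk p) V (Kk p) : V →ₗ[Kk p] V × Kk p)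
  naturality := by intros; ext x; rfl

/-- The natural projection `V ⊕ k → V`. -/
def projOne : addOne p ⟶ 𝟭 (FGModuleCat.{0} (Kk p)) where
  app V := FGModuleCat.ofHom (LinearMap.fst (Kk p) V (Kk p) : V × Kk p →ₗ[Kk p] V)
  naturality := by intros; ext x; rfl

/-- Precomposition with `V ↦ V ⊕ k`, i.e. `F ↦ (V ↦ F(V ⊕ k))`. -/
def preAdd : FF p ⥤ FF p := (Functor.whiskeringLeft _ _ _).obj (addOne p)

/-- The natural transformation `F ⟶ F(− ⊕ k)` induced by the inclusions `i_V`. -/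
def unitPre : 𝟭 (FF p) ⟶ preAdd p where
  app F := Functor.whiskerRight (inclOne p) F
  naturality := by
    intro F G α
    ext V x
    exact congrArg (fun g => ModuleCat.Hom.hom g x) (α.naturality ((inclOne p).app V)).symm

/-- The difference functor `Δ : 𝓕 → 𝓕`, the cokernel of `F ⟶ F(− ⊕ k)`. -/
def Delta : FF p ⥤ FF p := cokernel (unitPre p)

/-- Iterates `Δ^n` of the difference functor. -/
def deltaIter : ℕ → (FF p ⥤ FF p)
  | 0 => 𝟭 (FF p)
  | n + 1 => deltaIter n ⋙ Delta p

/-- `F` is polynomial of degree at most `n` if `Δ^{n+1} F = 0`. -/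
def IsPolyLE (n : ℕ) (F : FF p) : Prop := IsZero ((deltaIter p (n + 1)).obj F)



/-- The forgetful functor, i.e. the identity functor `Id ∈ 𝓕`. -/
def idFun : FF p := forget₂ (FGModuleCat.{0} (Kk p)) (ModuleCat.{0} (Kk p))

/-- The constant functor with value `k`, i.e. the unit of `𝓕`. -/
def constK : FF p := (Functor.const _).obj (ModuleCat.of (Kk p) (Kk p))

/-- The functor `P ∈ 𝓕`, `V ↦ k[V]`. -/
def Pfun : FF p where
  obj V := ModuleCat.of (Kk p) ((V : Type) →₀ Kk p)
  map f := ModuleCat.ofHom (Finsupp.lmapDomain (Kk p) (Kk p) f.hom.hom)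
  map_id V := ModuleCat.hom_ext (Finsupp.lmapDomain_id _ _)
  map_comp f g := by
    apply ModuleCat.hom_ext
    apply Finsupp.lhom_ext
    intro a b
    simp [Finsupp.lmapDomain_apply, Finsupp.mapDomain_single]

/-- The augmentation `P ⟶ k`, `[v] ↦ 1`. -/
def augP : Pfun p ⟶ constK p where
  app V := ModuleCat.ofHom (Finsupp.linearCombination (Kk p) (fun _ : (V : Type) => (1 : Kk p)))
  naturality := by
    intro V W f
    apply ModuleCat.hom_ext
    apply Finsupp.lhom_ext
    intro a b
    simp only [Pfun, constK, ModuleCat.hom_comp, ModuleCat.hom_ofHom, Functor.const_obj_map,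
      ModuleCat.hom_id]
    erw [LinearMap.comp_apply, Finsupp.lmapDomain_apply, Finsupp.mapDomain_single,
      Finsupp.linearCombination_single, Finsupp.linearCombination_single]
    try simp


/-- The reduced functor `P̄ ∈ 𝓕`, the kernel of the augmentation `P ⟶ k`. -/
def Pbar : FF p := kernel (augP p)

/-- The functor `I_W ∈ 𝓕`, `V ↦ (functions Hom(V,W) → k)`. -/
def Ifun (W : FGModuleCat.{0} (Kk p)) : FF p where
  obj V := ModuleCat.of (Kk p) ((V →ₗ[Kk p] W) → Kk p)
  map {V V'} f := ModuleCat.ofHom (LinearMap.funLeft (Kk p) (Kk p)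
    (fun ℓ : (V' : Type _) →ₗ[Kk p] W => ℓ ∘ₗ (f.hom.hom : V →ₗ[Kk p] V')))
  map_id V := by ext φ; rfl
  map_comp f g := by ext φ; rfl

/-- The functor `I = I_k ∈ 𝓕`. -/
def Icfun : FF p := Ifun p (FGModuleCat.of (Kk p) (Kk p))

/-- Evaluation at the zero homomorphism, `I ⟶ k`. -/
def evalZero : Icfun p ⟶ constK p where
  app V := ModuleCat.ofHom (LinearMap.proj (0 : V →ₗ[Kk p] Kk p))
  naturality := by
    intro V W f
    ext φ
    have : (0 : (W : Type) →ₗ[Kk p] Kk p) ∘ₗ (f.hom.hom : V →ₗ[Kk p] W) = 0 := by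
      ext x; rfl
    exact congrArg φ this

/-- The reduced functor `Ī ∈ 𝓕` of functions vanishing at `0`. -/
def Ibar : FF p := kernel (evalZero p)


/-- The largest subspace of `F(V)` belonging to a subfunctor of `F` that is
polynomial of degree at most `n`; objectwise, this is the value `(p_n F)(V)`. -/
def pSub (n : ℕ) (F : FF p) (V : FGModuleCat.{0} (Kk p)) :
    Submodule (Kk p) (F.obj V) :=
  ⨆ (A : FF p) (j : A ⟶ F) (_ : Mono j) (_ : IsPolyLE p n A),
    LinearMap.range (j.app V).hom

/-!
If `F` has degree `≤ n`, then `F(V ⊕ kⁿ⁺¹)` is spanned by the images of the `n + 1` coordinate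
hyperplanes `V ⊕ kⁿ`: by induction on `n`, since `ΔF(V) = F(V ⊕ k) / F(V)`. Now let `A ⊆ P` have
degree `≤ m`, `a ∈ A(V) ⊆ k[V]` and `v ≠ 0`. Choose `φ` with `φ v = 1` and push `a` along the
injection `g : v ↦ (v, φ v, …, φ v)` into `V ⊕ kᵐ⁺¹`. The point `g v` has all added coordinates
equal to `1`, so it lies on none of the hyperplanes, and the coefficient of `[g v]` in `g_* a`,
which is `a v`, vanishes. Hence `a` is a multiple of `[0]`, and if `a ∈ P̄(V)` then `a = 0`.
-/

def addOneIter : ℕ → (FGModuleCat.{0} (Kk p) ⥤ FGModuleCat.{0} (Kk p))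
  | 0 => 𝟭 _
  | n + 1 => addOneIter n ⋙ addOne p

/-- The inclusion `V ⊕ kⁿ → V ⊕ kⁿ⁺¹` that misses the `i`-th coordinate of `kⁿ⁺¹`. -/
def coordIncl : (n : ℕ) → Fin (n + 1) → (addOneIter p n ⟶ addOneIter p (n + 1))
  | 0, _ => Functor.whiskerLeft (addOneIter p 0) (inclOne p)
  | n + 1, i => Fin.lastCases (Functor.whiskerLeft (addOneIter p (n + 1)) (inclOne p))
      (fun j => Functor.whiskerRight (coordIncl n j) (addOne p)) i

def Pbar.ι : Pbar p ⟶ Pfun p := kernel.ι (augP p)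

instance : Mono (Pbar.ι p) := inferInstanceAs (Mono (kernel.ι (augP p)))

lemma Pbar.ι_augP : Pbar.ι p ≫ augP p = 0 := kernel.condition (augP p)

lemma Finsupp.eq_zero_of_linearCombination_one_eq_zero {α K : Type*} [Field K] {a : α →₀ K}
    {x₀ : α} (ha : ∀ x ≠ x₀, a x = 0)
    (hsum : Finsupp.linearCombination K (fun _ => (1 : K)) a = 0) : a = 0 := by
  have hsingle : a = Finsupp.single x₀ (a x₀) := by
    ext x
    rcases eq_or_ne x x₀ with rfl | hx
    · simp
    · rw [ha x hx, Finsupp.single_eq_of_ne hx]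
  rw [hsingle, Finsupp.linearCombination_single, smul_eq_mul, mul_one] at hsum
  rw [hsingle, hsum, Finsupp.single_zero]

section Delta

variable {p}

def deltaπ (F : FF p) (V : FGModuleCat.{0} (Kk p)) :
    F.obj ((addOne p).obj V) ⟶ ((Delta p).obj F).obj V :=
  ((cokernel.π (unitPre p)).app F).app V

lemma deltaπ_surjective (F : FF p) (V : FGModuleCat.{0} (Kk p)) :
    Function.Surjective (deltaπ F V) := by
  rw [← ModuleCat.epi_iff_surjective]
  exact (NatTrans.epi_iff_epi_app _).mp ((NatTrans.epi_iff_epi_app _).mp inferInstance F) V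

lemma ker_deltaπ (F : FF p) (V : FGModuleCat.{0} (Kk p)) :
    LinearMap.ker (deltaπ F V).hom = LinearMap.range (F.map ((inclOne p).app V)).hom := by
  have hexact := ((ShortComplex.mk _ _ (cokernel.condition (unitPre p))).exact_of_g_is_cokernel
    (cokernelIsCokernel _)).map ((evaluation (FF p) (FF p)).obj F ⋙ (evaluation _ _).obj V)
  exact ((ShortComplex.moduleCat_exact_iff_range_eq_ker _).mp hexact).symm

lemma deltaπ_naturality (F : FF p) {V W : FGModuleCat.{0} (Kk p)} (g : V ⟶ W) :
    F.map ((addOne p).map g) ≫ deltaπ F W = deltaπ F V ≫ ((Delta p).obj F).map g :=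
  ((cokernel.π (unitPre p)).app F).naturality g

lemma range_delta_map (F : FF p) {V W : FGModuleCat.{0} (Kk p)} (g : V ⟶ W) :
    LinearMap.range (((Delta p).obj F).map g).hom =
      (LinearMap.range (F.map ((addOne p).map g)).hom).map (deltaπ F W).hom := by
  rw [← LinearMap.range_comp, ← ModuleCat.hom_comp, deltaπ_naturality, ModuleCat.hom_comp,
    LinearMap.range_comp_of_range_eq_top _ (LinearMap.range_eq_top.mpr (deltaπ_surjective F V))]

lemma deltaIter_succ' : ∀ n : ℕ, deltaIter p (n + 1) = Delta p ⋙ deltaIter p n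
  | 0 => rfl
  | n + 1 => by
    change deltaIter p (n + 1) ⋙ Delta p = Delta p ⋙ deltaIter p n ⋙ Delta p
    rw [deltaIter_succ' n]
    rfl

lemma isPolyLE_succ_iff {n : ℕ} {F : FF p} :
    IsPolyLE p (n + 1) F ↔ IsPolyLE p n ((Delta p).obj F) := by
  rw [IsPolyLE, deltaIter_succ']
  rfl

end Delta

section Stabilization

variable {p}

lemma coordIncl_last (n : ℕ) :
    coordIncl p n (Fin.last n) = Functor.whiskerLeft (addOneIter p n) (inclOne p) := by
  cases n
  · rfl
  · exact Fin.lastCases_last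

lemma coordIncl_castSucc (n : ℕ) (i : Fin (n + 1)) :
    coordIncl p (n + 1) i.castSucc = Functor.whiskerRight (coordIncl p n i) (addOne p) :=
  Fin.lastCases_castSucc _

def graphDiag {V : FGModuleCat.{0} (Kk p)} (φ : V →ₗ[Kk p] Kk p) :
    (n : ℕ) → (V ⟶ (addOneIter p n).obj V)
  | 0 => 𝟙 V
  | n + 1 => FGModuleCat.ofHom ((graphDiag φ n).hom.hom.prod φ)

lemma graphDiag_injective {V : FGModuleCat.{0} (Kk p)} (φ : V →ₗ[Kk p] Kk p) :
    ∀ n, Function.Injective (graphDiag φ n).hom.hom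
  | 0 => Function.injective_id
  | n + 1 => fun _ _ h => graphDiag_injective φ n (congrArg Prod.fst h)

lemma coordIncl_app_ne_graphDiag {V : FGModuleCat.{0} (Kk p)} {φ : V →ₗ[Kk p] Kk p} {v : V}
    (hv : φ v ≠ 0) : ∀ (n : ℕ) (i : Fin (n + 1)) (z : (addOneIter p n).obj V),
      ((coordIncl p n i).app V).hom.hom z ≠ (graphDiag φ (n + 1)).hom.hom v
  | 0, i, z, h => by
    rw [Fin.fin_one_eq_zero i, ← Fin.last_zero, coordIncl_last] at h
    exact hv (congrArg Prod.snd h).symm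
  | n + 1, i, z, h => by
    induction i using Fin.lastCases with
    | last =>
      rw [coordIncl_last] at h
      exact hv (congrArg Prod.snd h).symm
    | cast j =>
      rw [coordIncl_castSucc] at h
      exact coordIncl_app_ne_graphDiag hv n j z.1 (congrArg Prod.fst h)

theorem iSup_range_map_coordIncl_eq_top {n : ℕ} {F : FF p} (hF : IsPolyLE p n F)
    (V : FGModuleCat.{0} (Kk p)) :
    ⨆ i : Fin (n + 1), LinearMap.range (F.map ((coordIncl p n i).app V)).hom = ⊤ := by
  induction n generalizing F with
  | zero =>
    have hΔ : IsZero (((Delta p).obj F).obj V) := (Functor.isZero_iff _).mp hF V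
    refine eq_top_iff.mpr (le_iSup_of_le 0 ?_)
    change ⊤ ≤ LinearMap.range (F.map ((inclOne p).app V)).hom
    rw [← ker_deltaπ, LinearMap.ker_eq_top.mpr (congrArg ModuleCat.Hom.hom (hΔ.eq_of_tgt _ 0))]
  | succ n ih =>
    set W := (addOneIter p (n + 1)).obj V
    set S : Submodule (Kk p) (F.obj ((addOne p).obj W)) :=
      ⨆ i : Fin (n + 2), LinearMap.range (F.map ((coordIncl p (n + 1) i).app V)).hom
    have hker : LinearMap.ker (deltaπ F W).hom ≤ S := by
      rw [ker_deltaπ]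
      exact le_iSup_of_le (Fin.last (n + 1)) (by rw [coordIncl_last]; rfl)
    have hmap : S.map (deltaπ F W).hom = ⊤ := by
      rw [eq_top_iff, ← ih (isPolyLE_succ_iff.mp hF), Submodule.map_iSup]
      refine iSup_mono' fun i => ⟨i.castSucc, ?_⟩
      rw [range_delta_map, coordIncl_castSucc]
      rfl
    exact (Submodule.comap_map_eq_self hker).symm.trans (by rw [hmap, Submodule.comap_top]; rfl)

end Stabilization

section Subfunctors

variable {p}

lemma map_range_map_le {F G : FF p} (u : F ⟶ G) {V W : FGModuleCat.{0} (Kk p)} (f : V ⟶ W) :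
    (LinearMap.range (F.map f).hom).map (u.app W).hom ≤ LinearMap.range (G.map f).hom := by
  rw [← LinearMap.range_comp, ← ModuleCat.hom_comp, u.naturality, ModuleCat.hom_comp]
  exact LinearMap.range_comp_le_range _ _

lemma apply_graphDiag_eq_zero_of_mem_iSup {V : FGModuleCat.{0} (Kk p)} {φ : V →ₗ[Kk p] Kk p}
    {v : V} (hv : φ v ≠ 0) {n : ℕ} {y : ((addOneIter p (n + 1)).obj V : Type) →₀ Kk p}
    (hy : y ∈ ⨆ i : Fin (n + 1), LinearMap.range ((Pfun p).map ((coordIncl p n i).app V)).hom) :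
    y ((graphDiag φ (n + 1)).hom.hom v) = 0 := by
  refine (iSup_le fun i => ?_ : _ ≤ LinearMap.ker (Finsupp.lapply _)) hy
  rintro _ ⟨a, rfl⟩
  refine Finsupp.mapDomain_of_notMem_range _ _ ?_
  rintro ⟨z, hz⟩
  exact coordIncl_app_ne_graphDiag hv n i z hz

theorem apply_eq_zero_of_isPolyLE {m : ℕ} {F : FF p} (hF : IsPolyLE p m F) (u : F ⟶ Pfun p)
    {V : FGModuleCat.{0} (Kk p)} (x : F.obj V) {v : V} (hv : v ≠ 0) :
    Finsupp.lapply (R := Kk p) v (u.app V x) = 0 := by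
  obtain ⟨φ, hφ⟩ := Module.Projective.exists_dual_eq_one (Kk p) hv
  set g := graphDiag φ (m + 1)
  have hgx : F.map g x ∈
      ⨆ i : Fin (m + 1), LinearMap.range (F.map ((coordIncl p m i).app V)).hom := by
    rw [iSup_range_map_coordIncl_eq_top hF]
    trivial
  have hugx : u.app _ (F.map g x) ∈
      ⨆ i : Fin (m + 1), LinearMap.range ((Pfun p).map ((coordIncl p m i).app V)).hom := by
    have h := Submodule.mem_map_of_mem (f := (u.app _).hom) hgx
    rw [Submodule.map_iSup] at h
    exact iSup_mono (fun i => map_range_map_le u _) h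
  have hcoeff : Finsupp.lapply (R := Kk p) (g.hom.hom v) (u.app _ (F.map g x)) =
      Finsupp.lapply (R := Kk p) v (u.app V x) := by
    have hnat := ConcreteCategory.congr_hom (u.naturality g) x
    rw [ConcreteCategory.comp_apply, ConcreteCategory.comp_apply] at hnat
    rw [hnat]
    exact Finsupp.mapDomain_apply (graphDiag_injective φ (m + 1)) _ v
  rw [← hcoeff]
  exact apply_graphDiag_eq_zero_of_mem_iSup (hφ ▸ one_ne_zero) hugx

theorem isZero_of_isPolyLE_of_comp_augP {m : ℕ} {F : FF p} (hF : IsPolyLE p m F)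
    (u : F ⟶ Pfun p) [Mono u] (hu : u ≫ augP p = 0) : IsZero F := by
  refine (Functor.isZero_iff F).mpr fun V => ?_
  have hux (x : F.obj V) : u.app V x = 0 := by
    refine Finsupp.eq_zero_of_linearCombination_one_eq_zero (x₀ := 0)
      (fun v hv => apply_eq_zero_of_isPolyLE hF u x hv) ?_
    exact ConcreteCategory.congr_hom (congrArg (NatTrans.app · V) hu) x
  have hinj : Function.Injective (u.app V) :=
    (ModuleCat.mono_iff_injective _).mp ((NatTrans.mono_iff_mono_app u).mp inferInstance V)
  have : Subsingleton (F.obj V) := ⟨fun x y => hinj ((hux x).trans (hux y).symm)⟩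
  exact ModuleCat.isZero_of_subsingleton _

end Subfunctors

/-- `P̄` has no nonzero polynomial subfunctors: any subfunctor of `P̄`
that is polynomial of some finite degree is zero; equivalently `p_n P̄ = 0` for all `n`. -/
theorem stmt_14 (p : ℕ) [Fact p.Prime] :
    (∀ (A : FF p) (j : A ⟶ Pbar p), Mono j → (∃ m : ℕ, IsPolyLE p m A) → IsZero A) ∧
    (∀ (n : ℕ) (V : FGModuleCat.{0} (Kk p)), pSub p n (Pbar p) V = ⊥) := by
  have isZero_of_mono (A : FF p) (j : A ⟶ Pbar p) [Mono j] {m : ℕ} (hA : IsPolyLE p m A) :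
      IsZero A :=
    isZero_of_isPolyLE_of_comp_augP hA (j ≫ Pbar.ι p)
      (by rw [Category.assoc, Pbar.ι_augP, comp_zero])
  refine ⟨fun A j _ ⟨m, hA⟩ => isZero_of_mono A j hA, fun n V => ?_⟩
  refine eq_bot_iff.mpr (iSup_le fun A => iSup_le fun j => iSup_le fun _ => iSup_le fun hA => ?_)
  rw [((isZero_of_mono A j hA).obj V).eq_of_src (j.app V) 0, ModuleCat.hom_zero,
    LinearMap.range_zero]
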